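/- arXiv:1202.3974 — 2 statements merged into one kernel-verified Lean document; each statement's English description precedes it below -/
import Mathlib

section
/- For Zipf(α) popularity with α > 0, let t_C(N) be the unique root of Σ_{n=1}^{N}(1 − e^{-t/n^α}) = ⌊δN⌋ for fixed 0 < δ < 1. Then t_{⌊δN⌋}(N)/N^α → ψ_α^{-1}(δ) as N → ∞. -/
open Filter

/-!
Substituting `t = β N^α` turns `m_N(t)` into the Riemann sum `∑_{n=1}^N g(n/N)` of the antitone
function `g(x) = 1 - e^{-β/x^α}`, so `m_N(β N^α) / N → ψ_α(β)`. As `m_N` is monotone and `ψ_α`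
strictly increasing, for `β < ψ_α⁻¹(δ) < β'` we eventually get
`m_N(β N^α) < ⌊δN⌋ = m_N(t_N) < m_N(β' N^α)`, which traps `t_N / N^α` in `(β, β')`.
-/

/-- `ψ_α(β) = 1 − ∫_0^1 e^{-β/x^α} dx`. -/
noncomputable def psi (α β : ℝ) : ℝ := 1 - ∫ x in Set.Ioc (0 : ℝ) 1, Real.exp (-β / x ^ α)

open Finset Real Topology

theorem Finset.sum_Icc_one_eq_sum_Ico_succ {M : Type*} [AddCommMonoid M] (f : ℕ → M) (N : ℕ) :
    ∑ n ∈ Icc 1 N, f n = ∑ i ∈ Ico 0 N, f (i + 1) :=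
  (Finset.sum_Ico_add' f 0 N 1).symm

namespace AntitoneOn

variable {f : ℝ → ℝ} {N : ℕ}

theorem sum_Icc_one_le_integral (hf : AntitoneOn f (Set.Icc 0 N)) :
    ∑ n ∈ Icc 1 N, f n ≤ ∫ x in (0 : ℝ)..N, f x := by
  simpa [sum_Icc_one_eq_sum_Ico_succ (fun n => f n)] using
    AntitoneOn.sum_le_integral_Ico (a := 0) (b := N) (Nat.zero_le N) (by simpa using hf)

theorem integral_sub_le_sum_Icc_one (hf : AntitoneOn f (Set.Icc 0 N)) :
    (∫ x in (0 : ℝ)..N, f x) - (f 0 - f N) ≤ ∑ n ∈ Icc 1 N, f n := by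
  have hint := AntitoneOn.integral_le_sum_Ico (a := 0) (b := N) (Nat.zero_le N) (by simpa using hf)
  have hsplit : ∑ n ∈ Ico 0 N, f n + f N = f 0 + ∑ n ∈ Icc 1 N, f n := by
    rw [sum_Icc_one_eq_sum_Ico_succ (fun n => f n), ← range_eq_Ico, ← sum_range_succ,
      sum_range_succ']
    push_cast
    ring
  rw [Nat.cast_zero] at hint
  linarith

end AntitoneOn

/-- At `x = 0` the formula `1 - e^{-β/x^α}` gives the junk value `0` (as `0 ^ α = 0` and
`β / 0 = 0`); extending by `1` to `x ≤ 0` instead makes the function antitone on all of `ℝ`, as the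
sum–integral comparison lemmas require. -/
noncomputable def psiIntegrand (α β x : ℝ) : ℝ :=
  if x ≤ 0 then 1 else 1 - exp (-β / x ^ α)

section psiIntegrand

variable {α β : ℝ}

theorem psiIntegrand_of_pos {x : ℝ} (hx : 0 < x) : psiIntegrand α β x = 1 - exp (-β / x ^ α) :=
  if_neg hx.not_ge

theorem psiIntegrand_le_one (x : ℝ) : psiIntegrand α β x ≤ 1 := by
  unfold psiIntegrand
  split_ifs
  · exact le_rfl
  · linarith [exp_pos (-β / x ^ α)]

theorem psiIntegrand_nonneg (hβ : 0 ≤ β) (x : ℝ) : 0 ≤ psiIntegrand α β x := by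
  unfold psiIntegrand
  split_ifs with hx
  · exact zero_le_one
  · have : -β / x ^ α ≤ 0 :=
      div_nonpos_of_nonpos_of_nonneg (neg_nonpos.2 hβ) (rpow_nonneg (not_le.1 hx).le α)
    linarith [exp_le_one_iff.2 this]

theorem psiIntegrand_antitone (hα : 0 ≤ α) (hβ : 0 ≤ β) : Antitone (psiIntegrand α β) := by
  intro x y hxy
  rcases le_or_gt y 0 with hy | hy
  · rw [psiIntegrand, if_pos hy, psiIntegrand, if_pos (hxy.trans hy)]
  rcases le_or_gt x 0 with hx | hx
  · exact (psiIntegrand_le_one y).trans_eq (if_pos hx).symm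
  rw [psiIntegrand_of_pos hx, psiIntegrand_of_pos hy, sub_le_sub_iff_left, exp_le_exp, neg_div,
    neg_div, neg_le_neg_iff]
  exact div_le_div_of_nonneg_left hβ (rpow_pos_of_pos hx α) (rpow_le_rpow hx.le hxy hα)

theorem psiIntegrand_lt_of_lt {β' x : ℝ} (hx : 0 < x) (hβ : β < β') :
    psiIntegrand α β x < psiIntegrand α β' x := by
  rw [psiIntegrand_of_pos hx, psiIntegrand_of_pos hx, sub_lt_sub_iff_left, exp_lt_exp]
  exact div_lt_div_of_pos_right (neg_lt_neg hβ) (rpow_pos_of_pos hx α)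

theorem integral_psiIntegrand (hα : 0 ≤ α) (hβ : 0 ≤ β) :
    ∫ x in (0 : ℝ)..1, psiIntegrand α β x = psi α β := by
  have hint : IntervalIntegrable (psiIntegrand α β) MeasureTheory.volume 0 1 :=
    (psiIntegrand_antitone hα hβ).intervalIntegrable
  have hexp : MeasureTheory.IntegrableOn (fun x => exp (-β / x ^ α)) (Set.Ioc 0 1) := by
    refine ((intervalIntegrable_iff_integrableOn_Ioc_of_le zero_le_one).1
      ((intervalIntegrable_const (c := (1 : ℝ))).sub hint)).congr_fun (fun x hx => ?_)
      measurableSet_Ioc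
    simp [psiIntegrand_of_pos hx.1]
  rw [intervalIntegral.integral_of_le zero_le_one,
    MeasureTheory.setIntegral_congr_fun measurableSet_Ioc (fun x hx => psiIntegrand_of_pos hx.1),
    MeasureTheory.integral_sub (MeasureTheory.integrable_const 1) hexp]
  simp [psi]

end psiIntegrand

theorem psi_strictMonoOn {α : ℝ} (hα : 0 ≤ α) : StrictMonoOn (psi α) (Set.Ici 0) := by
  intro a ha b hb hab
  rw [← integral_psiIntegrand hα ha, ← integral_psiIntegrand hα hb, ← sub_pos,
    ← intervalIntegral.integral_sub (psiIntegrand_antitone hα hb).intervalIntegrable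
      (psiIntegrand_antitone hα ha).intervalIntegrable]
  refine intervalIntegral.intervalIntegral_pos_of_pos_on
    (((psiIntegrand_antitone hα hb).intervalIntegrable).sub
      (psiIntegrand_antitone hα ha).intervalIntegrable) (fun x hx => ?_) zero_lt_one
  exact sub_pos.2 (psiIntegrand_lt_of_lt hx.1 hab)

/-- The paper's `m_N(t)`. -/
noncomputable def zipfOccupancy (α : ℝ) (N : ℕ) (t : ℝ) : ℝ :=
  ∑ n ∈ Icc 1 N, (1 - exp (-t / (n : ℝ) ^ α))

theorem zipfOccupancy_monotone (α : ℝ) (N : ℕ) : Monotone (zipfOccupancy α N) := by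
  intro t₁ t₂ ht
  refine sum_le_sum fun n hn => ?_
  have hn : (0 : ℝ) < (n : ℝ) ^ α := rpow_pos_of_pos (by exact_mod_cast (mem_Icc.1 hn).1) α
  gcongr

section zipfOccupancy

variable {α : ℝ}

theorem zipfOccupancy_mul_rpow_eq_sum {N : ℕ} (hN : 0 < N) (β : ℝ) :
    zipfOccupancy α N (β * (N : ℝ) ^ α) = ∑ n ∈ Icc 1 N, psiIntegrand α β (n / N) := by
  have hN : (0 : ℝ) < N := by exact_mod_cast hN
  refine sum_congr rfl fun n hn => ?_
  have hn : (0 : ℝ) < n := by exact_mod_cast (mem_Icc.1 hn).1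
  rw [psiIntegrand_of_pos (div_pos hn hN), div_rpow hn.le hN.le, div_div_eq_mul_div, neg_mul,
    neg_div]

theorem integral_psiIntegrand_div (hα : 0 ≤ α) {β : ℝ} (hβ : 0 ≤ β) {N : ℕ} (hN : 0 < N) :
    ∫ x in (0 : ℝ)..N, psiIntegrand α β (x / N) = N * psi α β := by
  have hN : (N : ℝ) ≠ 0 := by exact_mod_cast hN.ne'
  rw [intervalIntegral.integral_comp_div _ hN, zero_div, div_self hN,
    integral_psiIntegrand hα hβ, smul_eq_mul]

theorem zipfOccupancy_mul_rpow_mem_Icc (hα : 0 ≤ α) {β : ℝ} (hβ : 0 ≤ β) {N : ℕ} (hN : 0 < N) :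
    zipfOccupancy α N (β * (N : ℝ) ^ α) ∈ Set.Icc (N * psi α β - 1) (N * psi α β) := by
  have hanti : AntitoneOn (fun x => psiIntegrand α β (x / N)) (Set.Icc 0 N) :=
    ((psiIntegrand_antitone hα hβ).comp_monotone
      (fun _ _ h => div_le_div_of_nonneg_right h (Nat.cast_nonneg N))).antitoneOn _
  have hlow := hanti.integral_sub_le_sum_Icc_one
  have hhigh := hanti.sum_Icc_one_le_integral
  rw [integral_psiIntegrand_div hα hβ hN] at hlow hhigh
  rw [zipfOccupancy_mul_rpow_eq_sum hN]
  refine ⟨le_trans ?_ hlow, hhigh⟩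
  have h0 : psiIntegrand α β (0 / N) = 1 := if_pos (zero_div _).le
  linarith [psiIntegrand_nonneg (α := α) hβ (N / N)]

theorem tendsto_zipfOccupancy_mul_rpow_div (hα : 0 ≤ α) {β : ℝ} (hβ : 0 ≤ β) :
    Tendsto (fun N : ℕ => zipfOccupancy α N (β * (N : ℝ) ^ α) / N) atTop (𝓝 (psi α β)) := by
  have hlow : Tendsto (fun N : ℕ => psi α β - 1 / N) atTop (𝓝 (psi α β)) := by
    simpa using tendsto_one_div_atTop_nhds_zero_nat.const_sub (psi α β)
  refine tendsto_of_tendsto_of_tendsto_of_le_of_le' hlow tendsto_const_nhds ?_ ?_ <;>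
    filter_upwards [eventually_gt_atTop 0] with N hN <;>
    have hN' : (0 : ℝ) < N := by exact_mod_cast hN
  · rw [le_div_iff₀ hN', sub_mul, one_div_mul_cancel hN'.ne', mul_comm]
    exact (zipfOccupancy_mul_rpow_mem_Icc hα hβ hN).1
  · rw [div_le_iff₀ hN', mul_comm (psi α β)]
    exact (zipfOccupancy_mul_rpow_mem_Icc hα hβ hN).2

end zipfOccupancy

theorem tendsto_intFloor_mul_div_atTop (δ : ℝ) :
    Tendsto (fun N : ℕ => (⌊δ * N⌋ : ℝ) / N) atTop (𝓝 δ) := by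
  have hlow : Tendsto (fun N : ℕ => δ - 1 / N) atTop (𝓝 δ) := by
    simpa using tendsto_one_div_atTop_nhds_zero_nat.const_sub δ
  refine tendsto_of_tendsto_of_tendsto_of_le_of_le' hlow tendsto_const_nhds ?_ ?_ <;>
    filter_upwards [eventually_gt_atTop 0] with N hN <;>
    have hN' : (0 : ℝ) < N := by exact_mod_cast hN
  · rw [le_div_iff₀ hN', sub_mul, one_div_mul_cancel hN'.ne']
    exact (Int.sub_one_lt_floor _).le
  · rw [div_le_iff₀ hN']
    exact Int.floor_le _

section rootAsymptotics

variable {α δ : ℝ} {t : ℕ → ℝ}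

theorem eventually_lt_div_rpow_of_psi_lt (hα : 0 ≤ α) {a : ℝ} (ha : 0 ≤ a) (hψ : psi α a < δ)
    (ht : ∀ᶠ N in atTop, zipfOccupancy α N (t N) = ⌊δ * N⌋) :
    ∀ᶠ N : ℕ in atTop, a < t N / (N : ℝ) ^ α := by
  filter_upwards [(tendsto_zipfOccupancy_mul_rpow_div hα ha).eventually_lt
    (tendsto_intFloor_mul_div_atTop δ) hψ, ht, eventually_gt_atTop 0] with N hlt hroot hN
  have hN : (0 : ℝ) < N := by exact_mod_cast hN
  rw [← hroot, div_lt_div_iff_of_pos_right hN] at hlt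
  rw [lt_div_iff₀ (rpow_pos_of_pos hN α)]
  exact (zipfOccupancy_monotone α N).reflect_lt hlt

theorem eventually_div_rpow_lt_of_lt_psi (hα : 0 ≤ α) {b : ℝ} (hb : 0 ≤ b) (hψ : δ < psi α b)
    (ht : ∀ᶠ N in atTop, zipfOccupancy α N (t N) = ⌊δ * N⌋) :
    ∀ᶠ N : ℕ in atTop, t N / (N : ℝ) ^ α < b := by
  filter_upwards [(tendsto_intFloor_mul_div_atTop δ).eventually_lt
    (tendsto_zipfOccupancy_mul_rpow_div hα hb) hψ, ht, eventually_gt_atTop 0] with N hlt hroot hN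
  have hN : (0 : ℝ) < N := by exact_mod_cast hN
  rw [← hroot, div_lt_div_iff_of_pos_right hN] at hlt
  rw [div_lt_iff₀ (rpow_pos_of_pos hN α)]
  exact (zipfOccupancy_monotone α N).reflect_lt hlt

end rootAsymptotics

theorem stmt12_general (α : ℝ) (hα : 0 < α) (δ : ℝ)
    (βstar : ℝ) (hβstar : 0 < βstar) (hinv : psi α βstar = δ)
    (t : ℕ → ℝ)
    (ht : ∀ N : ℕ, 1 ≤ N → 0 ≤ t N ∧
      ∑ n ∈ Finset.Icc 1 N, (1 - Real.exp (-(t N) / (n : ℝ) ^ α)) = (⌊δ * N⌋ : ℝ)) :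
    Tendsto (fun N : ℕ => t N / (N : ℝ) ^ α) atTop (nhds βstar) := by
  have hroot : ∀ᶠ N in atTop, zipfOccupancy α N (t N) = ⌊δ * N⌋ :=
    (eventually_ge_atTop 1).mono fun N hN => (ht N hN).2
  have hψ := psi_strictMonoOn hα.le
  subst hinv
  refine tendsto_order.2 ⟨fun a ha => ?_, fun b hb => ?_⟩
  · have ha₀ : (0 : ℝ) ≤ max a 0 := le_max_right a 0
    filter_upwards [eventually_lt_div_rpow_of_psi_lt hα.le ha₀
      (hψ ha₀ hβstar.le (max_lt ha hβstar)) hroot] with N hN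
    exact (le_max_left a 0).trans_lt hN
  · have hb₀ : 0 ≤ b := hβstar.le.trans hb.le
    exact eventually_div_rpow_lt_of_lt_psi hα.le hb₀ (hψ hβstar.le hb₀ hb) hroot

/-- Proposition 3, first part: for Zipf(α) popularity, if `t N` is a
nonnegative root of `∑_{n=1}^N (1 − e^{-t/n^α}) = ⌊δN⌋` for each `N`, with `0 < δ < 1`,
then `t N / N^α → ψ_α⁻¹(δ)` as `N → ∞`. -/
theorem stmt12 (α : ℝ) (hα : 0 < α) (δ : ℝ) (hδ0 : 0 < δ) (hδ1 : δ < 1)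
    (βstar : ℝ) (hβstar : 0 < βstar) (hinv : psi α βstar = δ)
    (t : ℕ → ℝ)
    (ht : ∀ N : ℕ, 1 ≤ N → 0 ≤ t N ∧
      ∑ n ∈ Finset.Icc 1 N, (1 - Real.exp (-(t N) / (n : ℝ) ^ α)) = (⌊δ * N⌋ : ℝ)) :
    Tendsto (fun N : ℕ => t N / (N : ℝ) ^ α) atTop (nhds βstar) :=
  stmt12_general α hα δ βstar hβstar hinv t ht
end

section
/- For geometric popularity q(n) = ρ^n with 0 < ρ < 1, the mean m(t) = Σ_{n=1}^{∞} (1 − e^{-ρ^n t}) satisfies m(t) = −log t/log ρ + O(1) as t → ∞. -/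
/-!
Put `s = -log t / log ρ` and `N = ⌊s⌋`, so that `ρᴺ t ≥ 1 ≥ ρᴺ⁺¹ t`. The terms
`1 - exp (-ρⁿ⁺¹ t)` with `n < N` fall short of `1` by at most
`exp (-ρⁿ⁺¹ t) ≤ (ρⁿ⁺¹ t)⁻¹ ≤ ρᴺ⁻¹⁻ⁿ`, and those with `n ≥ N` are at most `ρⁿ⁺¹ t ≤ ρⁿ⁻ᴺ`.
Both errors are bounded by the geometric series `(1 - ρ)⁻¹`, so `m(t)` differs from `N` by at
most `(1 - ρ)⁻¹`, and from `s` by at most `1 + (1 - ρ)⁻¹`.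
-/

open Real Finset

lemma Real.exp_neg_le_inv {x : ℝ} (hx : 0 < x) : exp (-x) ≤ x⁻¹ := by
  rw [exp_neg]
  exact inv_anti₀ hx ((le_add_of_nonneg_right zero_le_one).trans (add_one_le_exp x))

section GeometricPopularity

variable {ρ t : ℝ}

lemma one_sub_exp_neg_pow_mul_nonneg (hρ : 0 ≤ ρ) (ht : 0 ≤ t) (n : ℕ) :
    0 ≤ 1 - exp (-(ρ ^ n) * t) := by
  rw [sub_nonneg, exp_le_one_iff, neg_mul, neg_nonpos]
  positivity

lemma one_sub_exp_neg_pow_mul_le (n : ℕ) : 1 - exp (-(ρ ^ n) * t) ≤ ρ ^ n * t := by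
  linarith [add_one_le_exp (-(ρ ^ n) * t)]

lemma summable_one_sub_exp_neg_pow_succ_mul (hρ0 : 0 ≤ ρ) (hρ1 : ρ < 1) (ht : 0 ≤ t) :
    Summable fun n : ℕ ↦ 1 - exp (-(ρ ^ (n + 1)) * t) :=
  .of_nonneg_of_le (fun n ↦ one_sub_exp_neg_pow_mul_nonneg hρ0 ht _)
    (fun n ↦ one_sub_exp_neg_pow_mul_le _)
    (((summable_geometric_of_lt_one hρ0 hρ1).mul_right (ρ * t)).congr fun n ↦ by ring)

lemma tsum_one_sub_exp_neg_pow_succ_mul_nat_add_le (hρ0 : 0 ≤ ρ) (hρ1 : ρ < 1) (ht : 0 ≤ t)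
    {N : ℕ} (hN : ρ ^ (N + 1) * t ≤ 1) :
    ∑' n : ℕ, (1 - exp (-(ρ ^ (n + N + 1)) * t)) ≤ (1 - ρ)⁻¹ := by
  have hgeom := summable_geometric_of_lt_one hρ0 hρ1
  calc ∑' n : ℕ, (1 - exp (-(ρ ^ (n + N + 1)) * t))
      ≤ ∑' n : ℕ, ρ ^ n * (ρ ^ (N + 1) * t) := by
        refine Summable.tsum_le_tsum (fun n ↦ ?_)
          ((summable_nat_add_iff N).mpr (summable_one_sub_exp_neg_pow_succ_mul hρ0 hρ1 ht))
          (hgeom.mul_right _)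
        exact (one_sub_exp_neg_pow_mul_le _).trans_eq (by ring)
    _ = (1 - ρ)⁻¹ * (ρ ^ (N + 1) * t) := by
      rw [tsum_mul_right, tsum_geometric_of_lt_one hρ0 hρ1]
    _ ≤ (1 - ρ)⁻¹ := mul_le_of_le_one_right (inv_nonneg.mpr (sub_nonneg.mpr hρ1.le)) hN

lemma sum_range_exp_neg_pow_succ_mul_le (hρ0 : 0 < ρ) (hρ1 : ρ < 1) {N : ℕ}
    (hN : 1 ≤ ρ ^ N * t) :
    ∑ n ∈ range N, exp (-(ρ ^ (n + 1)) * t) ≤ (1 - ρ)⁻¹ := by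
  have ht : 0 < t := pos_of_mul_pos_right (zero_lt_one.trans_le hN) (pow_nonneg hρ0.le N)
  have hterm : ∀ n ∈ range N, exp (-(ρ ^ (n + 1)) * t) ≤ ρ ^ (N - 1 - n) := by
    intro n hn
    have hsplit : ρ ^ (N - 1 - n) * ρ ^ (n + 1) = ρ ^ N := by
      rw [← pow_add]; congr 1; have := mem_range.mp hn; omega
    have hpos : 0 < ρ ^ (n + 1) * t := by positivity
    rw [neg_mul]
    refine (exp_neg_le_inv hpos).trans ((inv_le_iff_one_le_mul₀ hpos).mpr ?_)
    rwa [← mul_assoc, hsplit]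
  calc ∑ n ∈ range N, exp (-(ρ ^ (n + 1)) * t)
      ≤ ∑ n ∈ range N, ρ ^ (N - 1 - n) := sum_le_sum hterm
    _ = ∑ k ∈ range N, ρ ^ k := sum_range_reflect (fun k ↦ ρ ^ k) N
    _ ≤ (1 - ρ)⁻¹ := by
      simpa [← range_eq_Ico] using geom_sum_Ico_le_of_lt_one (m := 0) (n := N) hρ0.le hρ1

theorem abs_tsum_one_sub_exp_neg_pow_succ_mul_sub_le (hρ0 : 0 < ρ) (hρ1 : ρ < 1) {N : ℕ}
    (hN : 1 ≤ ρ ^ N * t) (hN' : ρ ^ (N + 1) * t ≤ 1) :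
    |∑' n : ℕ, (1 - exp (-(ρ ^ (n + 1)) * t)) - N| ≤ (1 - ρ)⁻¹ := by
  have ht : 0 ≤ t := nonneg_of_mul_nonneg_right (zero_le_one.trans hN) (pow_pos hρ0 N)
  have hsum := summable_one_sub_exp_neg_pow_succ_mul hρ0.le hρ1 ht
  rw [← hsum.sum_add_tsum_nat_add N, sum_sub_distrib, sum_const, card_range, nsmul_one]
  have hhead := sum_range_exp_neg_pow_succ_mul_le hρ0 hρ1 hN
  have htail := tsum_one_sub_exp_neg_pow_succ_mul_nat_add_le hρ0.le hρ1 ht hN'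
  have htail0 : 0 ≤ ∑' n : ℕ, (1 - exp (-(ρ ^ (n + N + 1)) * t)) :=
    tsum_nonneg fun n ↦ one_sub_exp_neg_pow_mul_nonneg hρ0.le ht _
  have hhead0 : 0 ≤ ∑ n ∈ range N, exp (-(ρ ^ (n + 1)) * t) :=
    sum_nonneg fun n _ ↦ (exp_pos _).le
  rw [abs_le]
  constructor <;> linarith

end GeometricPopularity

lemma log_pow_mul_eq {ρ t : ℝ} (hρ : 0 < ρ) (hρ1 : ρ ≠ 1) (ht : 0 < t) (N : ℕ) :
    log (ρ ^ N * t) = (-(log t / log ρ) - N) * -log ρ := by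
  have hlog : log ρ ≠ 0 := log_ne_zero_of_pos_of_ne_one hρ hρ1
  rw [log_mul (pow_pos hρ N).ne' ht.ne', log_pow]
  field_simp
  ring

/-- for geometric popularity `q(n) = ρⁿ`, `0 < ρ < 1`,
`m(t) = ∑_{n=1}^∞ (1 − e^{-ρⁿ t}) = −log t / log ρ + O(1)` as `t → ∞`, i.e. the
difference is bounded for `t ≥ 1`. -/
theorem stmt13 (ρ : ℝ) (hρ0 : 0 < ρ) (hρ1 : ρ < 1)
    (m : ℝ → ℝ) (hm : ∀ t, m t = ∑' n : ℕ, (1 - Real.exp (-(ρ ^ (n + 1)) * t))) :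
    ∃ M : ℝ, ∀ t : ℝ, 1 ≤ t → |m t - (-(Real.log t / Real.log ρ))| ≤ M := by
  refine ⟨(1 - ρ)⁻¹ + 1, fun t ht ↦ ?_⟩
  have ht0 : 0 < t := one_pos.trans_le ht
  have hlogρ : 0 < -log ρ := neg_pos.mpr (log_neg hρ0 hρ1)
  set s := -(log t / log ρ)
  have hs : 0 ≤ s :=
    neg_nonneg.mpr (div_nonpos_of_nonneg_of_nonpos (log_nonneg ht) (log_neg hρ0 hρ1).le)
  set N := ⌊s⌋₊
  have hNs : (N : ℝ) ≤ s := Nat.floor_le hs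
  have hsN : s < N + 1 := Nat.lt_floor_add_one s
  have hN : 1 ≤ ρ ^ N * t := by
    rw [← log_nonneg_iff (by positivity), log_pow_mul_eq hρ0 hρ1.ne ht0]
    exact mul_nonneg (sub_nonneg.mpr hNs) hlogρ.le
  have hN' : ρ ^ (N + 1) * t ≤ 1 := by
    rw [← log_nonpos_iff (by positivity), log_pow_mul_eq hρ0 hρ1.ne ht0]
    exact mul_nonpos_of_nonpos_of_nonneg (by push_cast; linarith) hlogρ.le
  have hmN := abs_tsum_one_sub_exp_neg_pow_succ_mul_sub_le hρ0 hρ1 hN hN'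
  rw [← hm] at hmN
  calc |m t - s| ≤ |m t - N| + |(N : ℝ) - s| := abs_sub_le _ _ _
    _ ≤ (1 - ρ)⁻¹ + 1 := add_le_add hmN (by rw [abs_le]; constructor <;> linarith)
end
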